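/- arXiv:2509.09924 — 2 statements merged into one kernel-verified Lean document; each statement's English description precedes it below -/
import Mathlib

section
/- Let ι be a countable index set, d : ι → ℝ with d(i) ≥ 0, b : ι → ℝ with b(i) > 0, with each shell {i : n−1 ≤ d(i) < n} finite, and define the critical exponent δ = limsup_{n→∞} (1/n) log ∑_{i : n−1 ≤ d(i) < n} b(i). Assume δ ∈ ℝ. Then the series P(s) = ∑_{i∈ι} b(i) e^{−s·d(i)} converges for every s > δ and diverges for every s < δ. -/
open Filter

/-- Convergence/divergence dichotomy for the generalized Poincaré series
`P(s) = ∑ᵢ b i · exp (-s · d i)` at its critical exponent `δ`. -/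
theorem poincare_series_dichotomy
    {ι : Type*} [Countable ι] (d b : ι → ℝ)
    (hd : ∀ i, 0 ≤ d i) (hb : ∀ i, 0 < b i)
    (hfin : ∀ n : ℕ, ({i | (n : ℝ) - 1 ≤ d i ∧ d i < n} : Set ι).Finite)
    (δ : ℝ)
    (hδ : Filter.limsup (fun n : ℕ =>
        (if (∑ i ∈ (hfin n).toFinset, b i) = 0 then (⊥ : EReal)
         else ((Real.log (∑ i ∈ (hfin n).toFinset, b i) / n : ℝ) : EReal))) atTop
      = (δ : EReal)) :
    (∀ s : ℝ, δ < s → Summable (fun i => b i * Real.exp (-s * d i))) ∧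
    (∀ s : ℝ, s < δ → ¬ Summable (fun i => b i * Real.exp (-s * d i))) := by
  classical
  set B : ℕ → ℝ := fun n => ∑ i ∈ (hfin n).toFinset, b i with hBdef
  have hBnonneg : ∀ n, 0 ≤ B n := fun n => Finset.sum_nonneg fun i _ => (hb i).le
  set π : ι → ℕ := fun i => ⌊d i⌋₊ + 1 with hπdef
  have hπ : ∀ i n, π i = n ↔ ((n : ℝ) - 1 ≤ d i ∧ d i < n) := by
    intro i n
    constructor
    · rintro rfl
      have h1 := Nat.floor_le (hd i)
      have h2 := Nat.lt_floor_add_one (d i)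
      constructor
      · simp only [hπdef]; push_cast; linarith
      · simp only [hπdef]; push_cast; linarith
    · rintro ⟨h1, h2⟩
      have hn : 1 ≤ n := by
        by_contra h
        push_neg at h
        interval_cases n
        · simp at h2; linarith [hd i]
      have hfl : ⌊d i⌋₊ = n - 1 := by
        rw [Nat.floor_eq_iff (hd i)]
        rw [Nat.cast_sub hn]
        push_cast
        constructor <;> linarith
      simp only [hπdef, hfl]
      omega
  have hmem : ∀ n (i : ι), i ∈ (hfin n).toFinset ↔ π i = n := by
    intro n i
    rw [Set.Finite.mem_toFinset, hπ]
    rfl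
  haveI hfinfib : ∀ n, Finite {i // π i = n} := by
    intro n
    have : ({i | π i = n} : Set ι).Finite := by
      apply (hfin n).subset
      intro i hi
      exact (hπ i n).mp hi
    exact this.to_subtype
  -- tsum over fiber = finset sum
  have hsum_eq : ∀ (g : ι → ℝ) n,
      (∑' j : {i // π i = n}, g j.val) = ∑ i ∈ (hfin n).toFinset, g i := by
    intro g n
    haveI : Fintype {i // π i = n} := Fintype.ofFinite _
    rw [tsum_fintype]
    exact (Finset.sum_subtype (hfin n).toFinset (hmem n) g).symm
  -- key summability equivalence
  have keyIff : ∀ s : ℝ, Summable (fun i => b i * Real.exp (-s * d i)) ↔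
      Summable (fun n => ∑ i ∈ (hfin n).toFinset, b i * Real.exp (-s * d i)) := by
    intro s
    set F : ι → ℝ := fun i => b i * Real.exp (-s * d i) with hF
    rw [← Equiv.summable_iff (Equiv.sigmaFiberEquiv π)]
    have hcomp : (F ∘ ⇑(Equiv.sigmaFiberEquiv π)) = fun p : Σ n, {i // π i = n} => F p.2.val := by
      funext p; rfl
    rw [hcomp, summable_sigma_of_nonneg (fun p => mul_nonneg (hb _).le (Real.exp_pos _).le)]
    have heq : (fun n => ∑' j : {i // π i = n}, F j.val)
        = fun n => ∑ i ∈ (hfin n).toFinset, F i := funext fun n => hsum_eq F n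
    rw [heq]
    exact and_iff_right fun n => Summable.of_finite
  -- per-shell bounds
  have hub : ∀ (s : ℝ) (n : ℕ), (∑ i ∈ (hfin n).toFinset, b i * Real.exp (-s * d i))
      ≤ Real.exp (|s| - s * n) * B n := by
    intro s n
    rw [hBdef, Finset.mul_sum]
    apply Finset.sum_le_sum
    intro i hi
    rw [hmem, hπ] at hi
    rw [mul_comm (Real.exp _) (b i)]
    apply mul_le_mul_of_nonneg_left _ (hb i).le
    apply Real.exp_le_exp.mpr
    have habs : s * ((n : ℝ) - d i) ≤ |s| := by
      calc s * ((n : ℝ) - d i) ≤ |s * ((n : ℝ) - d i)| := le_abs_self _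
        _ = |s| * |(n : ℝ) - d i| := abs_mul _ _
        _ ≤ |s| * 1 := by
            apply mul_le_mul_of_nonneg_left _ (abs_nonneg s)
            rw [abs_le]; constructor <;> [linarith [hi.2]; linarith [hi.1]]
        _ = |s| := mul_one _
    nlinarith [habs]
  have hlb : ∀ (s : ℝ) (n : ℕ), Real.exp (-|s| - s * n) * B n
      ≤ (∑ i ∈ (hfin n).toFinset, b i * Real.exp (-s * d i)) := by
    intro s n
    rw [hBdef, Finset.mul_sum]
    apply Finset.sum_le_sum
    intro i hi
    rw [hmem, hπ] at hi
    rw [mul_comm (Real.exp _) (b i)]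
    apply mul_le_mul_of_nonneg_left _ (hb i).le
    apply Real.exp_le_exp.mpr
    have habs : -|s| ≤ s * ((n : ℝ) - d i) := by
      have := neg_abs_le (s * ((n : ℝ) - d i))
      have h2 : |s * ((n : ℝ) - d i)| ≤ |s| := by
        rw [abs_mul]
        calc |s| * |(n : ℝ) - d i| ≤ |s| * 1 := by
              apply mul_le_mul_of_nonneg_left _ (abs_nonneg s)
              rw [abs_le]; constructor <;> [linarith [hi.2]; linarith [hi.1]]
          _ = |s| := mul_one _
      linarith [abs_le.mp h2]
    nlinarith [habs]
  constructor
  · -- convergence for s > δ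
    intro s hs
    obtain ⟨t, ht1, ht2⟩ : ∃ t, δ < t ∧ t < s := ⟨(δ + s) / 2, by linarith, by linarith⟩
    have hev : ∀ᶠ n in atTop,
        (if B n = 0 then (⊥ : EReal) else ((Real.log (B n) / n : ℝ) : EReal)) < (t : EReal) := by
      refine eventually_lt_of_limsup_lt ?_ (by isBoundedDefault)
      rw [hδ]
      exact_mod_cast ht1
    obtain ⟨N, hN⟩ := eventually_atTop.mp hev
    set M := N + 1 with hM
    have hBn : ∀ n, M ≤ n → B n ≤ Real.exp (t * n) := by
      intro n hn
      by_cases h0 : B n = 0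
      · rw [h0]; positivity
      · have h := hN n (by omega)
        rw [if_neg h0] at h
        have hlt : Real.log (B n) / n < t := by exact_mod_cast h
        have hn1 : (1 : ℝ) ≤ n := by exact_mod_cast Nat.one_le_iff_ne_zero.mpr (by omega)
        have hBpos : 0 < B n := lt_of_le_of_ne (hBnonneg n) (Ne.symm h0)
        have hlog : Real.log (B n) < t * n := by
          rw [div_lt_iff₀ (by linarith)] at hlt; linarith
        calc B n = Real.exp (Real.log (B n)) := (Real.exp_log hBpos).symm
          _ ≤ Real.exp (t * n) := Real.exp_le_exp.mpr hlog.le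
    rw [keyIff]
    rw [← summable_nat_add_iff M]
    have hg : Summable (fun n : ℕ => Real.exp |s| * Real.exp (t - s) ^ n) :=
      (summable_geometric_of_lt_one (Real.exp_pos _).le
        (Real.exp_lt_one_iff.mpr (by linarith))).mul_left _
    apply Summable.of_nonneg_of_le
      (fun n => Finset.sum_nonneg fun i _ => mul_nonneg (hb i).le (Real.exp_pos _).le)
      (fun n => ?_) ((summable_nat_add_iff M).mpr hg)
    calc (∑ i ∈ (hfin (n + M)).toFinset, b i * Real.exp (-s * d i))
        ≤ Real.exp (|s| - s * (n + M : ℕ)) * B (n + M) := hub s (n + M)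
      _ ≤ Real.exp (|s| - s * (n + M : ℕ)) * Real.exp (t * (n + M : ℕ)) := by
          exact mul_le_mul_of_nonneg_left (hBn (n + M) (by omega)) (Real.exp_pos _).le
      _ = Real.exp |s| * Real.exp (((n + M : ℕ) : ℝ) * (t - s)) := by
          rw [← Real.exp_add, ← Real.exp_add]; ring_nf
      _ = Real.exp |s| * Real.exp (t - s) ^ (n + M) := by rw [Real.exp_nat_mul]
  · -- divergence for s < δ
    intro s hs hsum
    obtain ⟨t, ht1, ht2⟩ : ∃ t, s < t ∧ t < δ := ⟨(s + δ) / 2, by linarith, by linarith⟩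
    have hfreq : ∃ᶠ n in atTop, (t : EReal) <
        (if B n = 0 then (⊥ : EReal) else ((Real.log (B n) / n : ℝ) : EReal)) := by
      refine frequently_lt_of_lt_limsup (by isBoundedDefault) ?_
      rw [hδ]
      exact_mod_cast ht2
    have hS : Summable (fun n => ∑ i ∈ (hfin n).toFinset, b i * Real.exp (-s * d i)) :=
      (keyIff s).mp hsum
    have hTend := hS.tendsto_atTop_zero
    have hev : ∀ᶠ n in atTop,
        (∑ i ∈ (hfin n).toFinset, b i * Real.exp (-s * d i)) < Real.exp (-|s|) :=
      hTend.eventually_lt_const (Real.exp_pos _)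
    obtain ⟨n, hn1, hn2⟩ := (hfreq.and_eventually hev).exists
    have h0 : B n ≠ 0 := by
      intro h
      rw [if_pos h] at hn1
      exact absurd hn1 (by simp)
    rw [if_neg h0] at hn1
    have hBpos : 0 < B n := lt_of_le_of_ne (hBnonneg n) (Ne.symm h0)
    have hB0 : B 0 = 0 := by
      rw [hBdef]
      apply Finset.sum_eq_zero
      intro i hi
      rw [hmem, hπ] at hi
      simp at hi
      linarith [hd i, hi.2]
    have hnne : n ≠ 0 := by
      intro h; rw [h, hB0] at h0; exact h0 rfl
    have hn1' : (1 : ℝ) ≤ n := by exact_mod_cast Nat.one_le_iff_ne_zero.mpr hnne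
    have hlt : t < Real.log (B n) / n := by exact_mod_cast hn1
    have hlog : t * n < Real.log (B n) := by
      rw [lt_div_iff₀ (by linarith)] at hlt; linarith
    have hBgt : Real.exp (t * n) < B n := (Real.lt_log_iff_exp_lt hBpos).mp hlog
    have hlow : Real.exp (-|s|) ≤ ∑ i ∈ (hfin n).toFinset, b i * Real.exp (-s * d i) := by
      calc Real.exp (-|s|) = Real.exp (-|s|) * 1 := (mul_one _).symm
        _ ≤ Real.exp (-|s|) * Real.exp ((t - s) * n) := by
            apply mul_le_mul_of_nonneg_left _ (Real.exp_pos _).le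
            rw [← Real.exp_zero]
            apply Real.exp_le_exp.mpr
            have : (0 : ℝ) ≤ (n : ℝ) := Nat.cast_nonneg n
            nlinarith
        _ = Real.exp (-|s| - s * n) * Real.exp (t * n) := by
            rw [← Real.exp_add, ← Real.exp_add]; ring_nf
        _ ≤ Real.exp (-|s| - s * n) * B n := by
            exact mul_le_mul_of_nonneg_left hBgt.le (Real.exp_pos _).le
        _ ≤ _ := hlb s n
    linarith
end

section
/- Patterson's trick: Let (a_n)_{n≥1} be a sequence of nonnegative reals and δ ∈ ℝ such that the series ∑_n a_n e^{−s n} converges for all s > δ and diverges for all s < δ. Then there exists a nondecreasing function h : [0,∞) → (0,∞) such that (i) for every ε > 0 there exists r_ε ≥ 0 with h(t + r) ≤ e^{ε t} h(r) for all t ≥ 0 and all r ≥ r_ε, and (ii) the series ∑_n a_n h(n) e^{−s n} diverges if and only if s ≤ δ. -/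
set_option maxHeartbeats 1000000 in
/-- Patterson's trick: given a nonnegative sequence `a` whose weighted exponential
series `∑ aₙ e^{-s n}` has critical exponent `δ`, there is a slowly growing
nondecreasing function `h > 0` such that `∑ aₙ h(n) e^{-s n}` diverges exactly
when `s ≤ δ`. -/
theorem patterson_trick (a : ℕ → ℝ) (ha : ∀ n, 1 ≤ n → 0 ≤ a n) (δ : ℝ)
    (hconv : ∀ s : ℝ, δ < s → Summable (fun n => a n * Real.exp (-s * n)))
    (hdiv : ∀ s : ℝ, s < δ → ¬ Summable (fun n => a n * Real.exp (-s * n))) :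
    ∃ h : ℝ → ℝ,
      (∀ t : ℝ, 0 ≤ t → 0 < h t) ∧
      (∀ s t : ℝ, 0 ≤ s → s ≤ t → h s ≤ h t) ∧
      (∀ ε : ℝ, 0 < ε → ∃ r_ε : ℝ, 0 ≤ r_ε ∧
        ∀ t r : ℝ, 0 ≤ t → r_ε ≤ r → h (t + r) ≤ Real.exp (ε * t) * h r) ∧
      (∀ s : ℝ, ¬ Summable (fun n : ℕ => a n * h n * Real.exp (-s * n)) ↔ s ≤ δ) := by
  classical
  -- Step 1: choose block endpoints.
  have key : ∀ k m : ℕ, 1 ≤ m → ∃ N : ℕ, m < N ∧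
      Real.exp ((1/(k+1 : ℝ)) * m) ≤
        ∑ n ∈ Finset.Ico m N, a n * Real.exp (-(δ - 1/(k+1 : ℝ)) * n) := by
    intro k m hm
    have hεkpos : (0:ℝ) < 1/(k+1 : ℝ) := by positivity
    have hns := hdiv (δ - 1/(k+1:ℝ)) (by linarith)
    set g : ℕ → ℝ := fun n => a n * Real.exp (-(δ - 1/(k+1:ℝ)) * n) with hg
    have hns1 : ¬ Summable (fun n => g (n + 1)) := by
      rw [summable_nat_add_iff]; exact hns
    have hgnn : ∀ n : ℕ, 0 ≤ g (n + 1) := fun n =>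
      mul_nonneg (ha _ (Nat.le_add_left 1 n)) (Real.exp_pos _).le
    have htend := (not_summable_iff_tendsto_nat_atTop_of_nonneg hgnn).mp hns1
    obtain ⟨N', hN'1, hN'2⟩ :=
      ((htend.eventually_ge_atTop
          (Real.exp ((1/(k+1:ℝ)) * m) + ∑ n ∈ Finset.Ico 1 m, g n)).and
        (Filter.eventually_ge_atTop m)).exists
    refine ⟨N' + 1, by omega, ?_⟩
    have e1 : ∑ n ∈ Finset.range N', g (n+1) = ∑ n ∈ Finset.Ico 1 (N'+1), g n := by
      rw [Finset.sum_Ico_eq_sum_range]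
      simp [add_comm]
    have e2 : ∑ n ∈ Finset.Ico 1 m, g n + ∑ n ∈ Finset.Ico m (N'+1), g n
        = ∑ n ∈ Finset.Ico 1 (N'+1), g n :=
      Finset.sum_Ico_consecutive g hm (by omega)
    have := hN'1
    rw [e1] at this
    linarith [e2, this]
  choose! Nf hNf1 hNf2 using key
  set r : ℕ → ℕ := fun k => Nat.rec 1 (fun k rk => Nf k rk) k with hrdef
  have hrsucc : ∀ k, r (k+1) = Nf k (r k) := fun k => rfl
  have hr1 : ∀ k, 1 ≤ r k := by
    intro k
    induction k with
    | zero => exact le_refl 1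
    | succ k ih => rw [hrsucc]; exact le_of_lt (lt_of_le_of_lt ih (hNf1 k (r k) ih))
  have hrlt : ∀ k, r k < r (k+1) := fun k => by
    rw [hrsucc]; exact hNf1 k (r k) (hr1 k)
  have hrmono : Monotone r := monotone_nat_of_le_succ (fun k => (hrlt k).le)
  have hrge : ∀ k, k + 1 ≤ r k := by
    intro k
    induction k with
    | zero => exact le_refl 1
    | succ k ih => have := hrlt k; omega
  have hr0 : r 0 = 1 := rfl
  have hblock : ∀ k : ℕ, Real.exp ((1/((k:ℝ)+1)) * r k) ≤
      ∑ n ∈ Finset.Ico (r k) (r (k+1)), a n * Real.exp (-(δ - 1/((k:ℝ)+1)) * n) := by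
    intro k; rw [hrsucc]; exact hNf2 k (r k) (hr1 k)
  -- Step 2: the slowly varying exponent F.
  set T : ℕ → ℝ → ℝ := fun k t => (1/(k+1:ℝ)) * (min t (r (k+1)) - min t (r k)) with hT
  set F : ℝ → ℝ := fun t => ∑ k ∈ Finset.range ⌈t⌉₊, T k t with hF
  have hrcast : ∀ k, (r k : ℝ) ≤ (r (k+1) : ℝ) := fun k => by exact_mod_cast (hrlt k).le
  have hTnonneg : ∀ k t, 0 ≤ T k t := by
    intro k t
    apply mul_nonneg (by positivity)
    have := min_le_min (le_refl t) (hrcast k)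
    linarith
  have hTzero : ∀ k (t : ℝ), t ≤ r k → T k t = 0 := by
    intro k t ht
    have h1 : min t (r k : ℝ) = t := min_eq_left ht
    have h2 : min t (r (k+1) : ℝ) = t := min_eq_left (ht.trans (hrcast k))
    simp [hT, h1, h2]
  have hFspec : ∀ (t : ℝ) (M : ℕ), ⌈t⌉₊ ≤ M → F t = ∑ k ∈ Finset.range M, T k t := by
    intro t M hM
    apply Finset.sum_subset (Finset.range_subset_range.mpr hM)
    intro k _ hk
    rw [Finset.mem_range, not_lt] at hk
    apply hTzero
    calc t ≤ (⌈t⌉₊ : ℝ) := Nat.le_ceil t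
      _ ≤ (k : ℝ) := by exact_mod_cast hk
      _ ≤ (r k : ℝ) := by exact_mod_cast le_trans (Nat.le_succ k) (hrge k)
  have hmin4 : ∀ (s t u v : ℝ), s ≤ t → u ≤ v →
      min s v - min s u ≤ min t v - min t u := by
    intro s t u v hst huv
    simp only [min_def]
    split_ifs <;> linarith
  have hFnonneg : ∀ t, 0 ≤ F t := fun t => Finset.sum_nonneg (fun k _ => hTnonneg k t)
  have hFmono : ∀ s t : ℝ, s ≤ t → F s ≤ F t := by
    intro s t hst
    rw [hFspec s (max ⌈s⌉₊ ⌈t⌉₊) (le_max_left _ _),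
        hFspec t (max ⌈s⌉₊ ⌈t⌉₊) (le_max_right _ _)]
    apply Finset.sum_le_sum
    intro k _
    exact mul_le_mul_of_nonneg_left (hmin4 s t _ _ hst (hrcast k)) (by positivity)
  have hFblock : ∀ (k : ℕ) (t : ℝ), (r k : ℝ) ≤ t → t ≤ r (k+1) →
      F t = F (r k) + (1/(k+1:ℝ)) * (t - r k) := by
    intro k t h1 h2
    set M := max ⌈t⌉₊ (max ⌈((r k : ℕ) : ℝ)⌉₊ (k+1)) with hM
    rw [hFspec t M (le_max_left _ _),
        hFspec _ M ((le_max_left _ _).trans (le_max_right _ _))]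
    rw [← sub_eq_iff_eq_add', ← Finset.sum_sub_distrib]
    rw [Finset.sum_eq_single k]
    · have hA : min t ((r k : ℕ) : ℝ) = ((r k : ℕ) : ℝ) := min_eq_right h1
      have hB : min t ((r (k+1) : ℕ) : ℝ) = t := min_eq_left h2
      have hC : min ((r k : ℕ) : ℝ) ((r k : ℕ) : ℝ) = ((r k : ℕ) : ℝ) := min_self _
      have hD : min ((r k : ℕ) : ℝ) ((r (k+1) : ℕ) : ℝ) = ((r k : ℕ) : ℝ) :=
        min_eq_left (hrcast k)
      simp only [hT, hA, hB, hC, hD]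
      ring
    · intro j _ hjk
      rcases lt_or_gt_of_ne hjk with hj|hj
      · have hj1 : (r (j+1) : ℝ) ≤ (r k : ℝ) := by
          exact_mod_cast hrmono (Nat.succ_le_of_lt hj)
        have hj0 : (r j : ℝ) ≤ (r k : ℝ) := by exact_mod_cast hrmono hj.le
        have e1 : min t ((r (j+1) : ℕ) : ℝ) = ((r (j+1) : ℕ) : ℝ) :=
          min_eq_right (hj1.trans h1)
        have e2 : min t ((r j : ℕ) : ℝ) = ((r j : ℕ) : ℝ) :=
          min_eq_right (hj0.trans h1)
        have e3 : min ((r k : ℕ) : ℝ) ((r (j+1) : ℕ) : ℝ) = ((r (j+1) : ℕ) : ℝ) :=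
          min_eq_right hj1
        have e4 : min ((r k : ℕ) : ℝ) ((r j : ℕ) : ℝ) = ((r j : ℕ) : ℝ) :=
          min_eq_right hj0
        simp only [hT, e1, e2, e3, e4]
        ring
      · have hjk1 : (r (k+1) : ℝ) ≤ (r j : ℝ) := by
          exact_mod_cast hrmono (Nat.succ_le_of_lt hj)
        have z1 : T j t = 0 := hTzero j t (h2.trans hjk1)
        have z2 : T j ((r k : ℕ) : ℝ) = 0 :=
          hTzero j _ ((h1.trans h2).trans hjk1)
        rw [z1, z2, sub_zero]
    · intro hk
      exfalso
      apply hk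
      rw [Finset.mem_range]
      calc k < k + 1 := Nat.lt_succ_self k
        _ ≤ M := (le_max_right _ _).trans (le_max_right _ _)
  have hFsub : ∀ (K : ℕ) (t rr : ℝ), 0 ≤ t → (r K : ℝ) ≤ rr →
      F (t + rr) ≤ F rr + (1/(K+1:ℝ)) * t := by
    intro K t rr ht hrr
    have hrr1 : (1:ℝ) ≤ rr := le_trans (by exact_mod_cast hr1 K) hrr
    set M := ⌈t + rr⌉₊ with hMdef
    have hrM : t + rr ≤ (r M : ℝ) := by
      calc t + rr ≤ (M : ℝ) := Nat.le_ceil _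
        _ ≤ (r M : ℝ) := by exact_mod_cast le_trans (Nat.le_succ M) (hrge M)
    rw [hFspec (t+rr) M (le_refl _), hFspec rr M (Nat.ceil_le_ceil (by linarith))]
    set p : ℕ → ℝ := fun j => min (t+rr) (r j : ℝ) - min rr (r j : ℝ) with hp
    have hptel : ∑ j ∈ Finset.range M, (p (j+1) - p j) = p M - p 0 :=
      Finset.sum_range_sub p M
    have hpM : p M = t := by
      have h1 : min (t+rr) ((r M : ℕ) : ℝ) = t + rr := min_eq_left hrM
      have h2 : min rr ((r M : ℕ) : ℝ) = rr := min_eq_left (by linarith)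
      simp [hp, h1, h2]
    have hp0 : p 0 = 0 := by
      have hr0' : ((r 0 : ℕ) : ℝ) = 1 := by rw [hr0]; norm_num
      have h1 : min (t+rr) ((r 0 : ℕ) : ℝ) = ((r 0 : ℕ) : ℝ) := by
        rw [hr0']; exact min_eq_right (by linarith)
      have h2 : min rr ((r 0 : ℕ) : ℝ) = ((r 0 : ℕ) : ℝ) := by
        rw [hr0']; exact min_eq_right hrr1
      simp [hp, h1, h2]
    have key2 : ∑ j ∈ Finset.range M, (T j (t+rr) - T j rr)
        ≤ (1/(K+1:ℝ)) * ∑ j ∈ Finset.range M, (p (j+1) - p j) := by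
      rw [Finset.mul_sum]
      apply Finset.sum_le_sum
      intro j _
      have hpj : 0 ≤ p (j+1) - p j := by
        have := hmin4 rr (t+rr) (r j : ℝ) (r (j+1) : ℝ) (by linarith) (hrcast j)
        simp only [hp]
        linarith
      have hTd : T j (t+rr) - T j rr = (1/(j+1:ℝ)) * (p (j+1) - p j) := by
        simp only [hT, hp]
        ring
      rw [hTd]
      rcases lt_or_ge j K with hj|hj
      · have h1 : (r (j+1) : ℝ) ≤ rr :=
          le_trans (by exact_mod_cast hrmono (Nat.succ_le_of_lt hj)) hrr
        have h0 : (r j : ℝ) ≤ rr :=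
          le_trans (by exact_mod_cast hrmono hj.le) hrr
        have hz : p (j+1) - p j = 0 := by
          have e1 : min (t+rr) ((r (j+1) : ℕ) : ℝ) = ((r (j+1) : ℕ) : ℝ) :=
            min_eq_right (by linarith)
          have e2 : min (t+rr) ((r j : ℕ) : ℝ) = ((r j : ℕ) : ℝ) :=
            min_eq_right (by linarith)
          have e3 : min rr ((r (j+1) : ℕ) : ℝ) = ((r (j+1) : ℕ) : ℝ) := min_eq_right h1
          have e4 : min rr ((r j : ℕ) : ℝ) = ((r j : ℕ) : ℝ) := min_eq_right h0
          simp [hp, e1, e2, e3, e4]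
        rw [hz, mul_zero, mul_zero]
      · apply mul_le_mul_of_nonneg_right _ hpj
        apply one_div_le_one_div_of_le (by positivity)
        exact_mod_cast Nat.succ_le_succ hj
    rw [← sub_le_iff_le_add', ← Finset.sum_sub_distrib]
    calc ∑ j ∈ Finset.range M, (T j (t+rr) - T j rr)
        ≤ (1/(K+1:ℝ)) * ∑ j ∈ Finset.range M, (p (j+1) - p j) := key2
      _ = (1/(K+1:ℝ)) * t := by rw [hptel, hpM, hp0, sub_zero]
  -- The function h.
  refine ⟨fun t => Real.exp (F t), fun t _ => Real.exp_pos _,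
    fun s t _ hst => Real.exp_le_exp.mpr (hFmono s t hst), ?_, ?_⟩
  · -- slow growth
    intro ε hε
    obtain ⟨K, hK⟩ := exists_nat_one_div_lt hε
    refine ⟨(r K : ℝ), Nat.cast_nonneg _, ?_⟩
    intro t rr ht hrr
    rw [← Real.exp_add]
    apply Real.exp_le_exp.mpr
    have := hFsub K t rr ht hrr
    nlinarith [mul_le_mul_of_nonneg_right hK.le ht]
  · -- divergence criterion
    have hsummax : ∀ s : ℝ, δ < s →
        Summable (fun n : ℕ => a n * Real.exp (F n) * Real.exp (-s * n)) := by
      intro s hs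
      obtain ⟨K, hK⟩ := exists_nat_one_div_lt (sub_pos.mpr hs)
      set εK : ℝ := 1/(K+1:ℝ) with hεK
      have hεKpos : 0 < εK := by positivity
      have hconvK := hconv (s - εK) (by linarith)
      set m := r K with hm
      rw [← summable_nat_add_iff m]
      apply Summable.of_nonneg_of_le
        (f := fun n : ℕ => Real.exp (F m - εK * m) * (a (n+m) * Real.exp (-(s - εK) * (n+m))))
      · intro n
        have han : 0 ≤ a (n+m) := ha _ (le_trans (hr1 K) (Nat.le_add_left m n))
        positivity
      · intro n
        have han : 0 ≤ a (n+m) := ha _ (le_trans (hr1 K) (Nat.le_add_left m n))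
        have h1 : F ((n + m : ℕ) : ℝ) ≤ F m + εK * n := by
          have h2 := hFsub K (n : ℝ) (m : ℝ) (Nat.cast_nonneg n) (le_refl _)
          have : ((n + m : ℕ) : ℝ) = (n : ℝ) + (m : ℝ) := by push_cast; ring
          rw [this]
          exact h2
        calc a (n+m) * Real.exp (F ((n+m : ℕ) : ℝ)) * Real.exp (-s * ((n+m : ℕ) : ℝ))
            ≤ a (n+m) * Real.exp (F (m : ℝ) + εK * n) * Real.exp (-s * ((n+m : ℕ) : ℝ)) := by
              apply mul_le_mul_of_nonneg_right
                (mul_le_mul_of_nonneg_left (Real.exp_le_exp.mpr h1) han) (Real.exp_pos _).le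
          _ = Real.exp (F (m : ℝ) - εK * m) * (a (n+m) * Real.exp (-(s - εK) * ((n:ℝ) + (m:ℝ)))) := by
              rw [mul_assoc, ← Real.exp_add, mul_comm (Real.exp _) (a (n+m) * _),
                mul_assoc, ← Real.exp_add]
              congr 2
              push_cast
              ring
      · exact (summable_nat_add_iff
            (f := fun n : ℕ => Real.exp (F (m:ℝ) - εK * (m:ℝ)) *
              (a n * Real.exp (-(s - εK) * (n:ℝ)))) m).mpr (hconvK.mul_left _) |>.congr (fun n => by push_cast; ring)
    intro s
    constructor
    · intro hns
      by_contra hsδ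
      push_neg at hsδ
      exact hns (hsummax s hsδ)
    · intro hsδ hsum
      set f : ℕ → ℝ := fun n => a n * Real.exp (F n) * Real.exp (-s * n) with hf
      set fδ : ℕ → ℝ := fun n => a n * Real.exp (F n) * Real.exp (-δ * n) with hfδ
      have hf1 : Summable (fun n => f (n+1)) := (summable_nat_add_iff 1).mpr hsum
      have hf1nn : ∀ n : ℕ, 0 ≤ f (n+1) := by
        intro n
        have := ha (n+1) (Nat.le_add_left 1 n)
        positivity
      -- each block contributes at least 1 to the δ-series
      have hblock1 : ∀ k : ℕ, (1:ℝ) ≤ ∑ n ∈ Finset.Ico (r k) (r (k+1)), fδ n := by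
        intro k
        set εk : ℝ := 1/(k+1:ℝ) with hεk
        have hεkpos : 0 < εk := by positivity
        have step : ∀ n ∈ Finset.Ico (r k) (r (k+1)),
            Real.exp (-εk * r k) * (a n * Real.exp (-(δ - εk) * n)) ≤ fδ n := by
          intro n hn
          rw [Finset.mem_Ico] at hn
          have hn1 : (r k : ℝ) ≤ (n : ℝ) := by exact_mod_cast hn.1
          have hn2 : (n : ℝ) ≤ (r (k+1) : ℝ) := by exact_mod_cast hn.2.le
          have han : 0 ≤ a n := ha n (le_trans (hr1 k) hn.1)
          have hFn : F n = F (r k) + εk * ((n : ℝ) - r k) := hFblock k n hn1 hn2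
          have hFge : εk * ((n:ℝ) - r k) ≤ F (n : ℝ) := by
            rw [hFn]
            have := hFnonneg ((r k : ℕ) : ℝ)
            linarith
          calc Real.exp (-εk * r k) * (a n * Real.exp (-(δ - εk) * n))
              = a n * Real.exp (εk * ((n:ℝ) - r k)) * Real.exp (-δ * n) := by
                rw [mul_comm (Real.exp _) _, mul_assoc, ← Real.exp_add, mul_assoc,
                  ← Real.exp_add]
                congr 2
                ring
            _ ≤ a n * Real.exp (F (n:ℝ)) * Real.exp (-δ * n) := by
                apply mul_le_mul_of_nonneg_right
                  (mul_le_mul_of_nonneg_left (Real.exp_le_exp.mpr hFge) han)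
                  (Real.exp_pos _).le
        have hsumge : Real.exp (-εk * r k) *
            (∑ n ∈ Finset.Ico (r k) (r (k+1)), a n * Real.exp (-(δ - εk) * n))
            ≤ ∑ n ∈ Finset.Ico (r k) (r (k+1)), fδ n := by
          rw [Finset.mul_sum]
          exact Finset.sum_le_sum step
        have := mul_le_mul_of_nonneg_left (hblock k) (Real.exp_pos (-εk * r k)).le
        rw [← Real.exp_add] at this
        have heq : -εk * r k + εk * r k = 0 := by ring
        rw [heq, Real.exp_zero] at this
        exact this.trans hsumge
      -- partial sums of the δ-series grow without bound
      have hpartial : ∀ K : ℕ, (K : ℝ) ≤ ∑ n ∈ Finset.Ico 1 (r K), fδ n := by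
        intro K
        induction K with
        | zero => simp [hr0]
        | succ K ih =>
          have hsplit : ∑ n ∈ Finset.Ico 1 (r K), fδ n +
              ∑ n ∈ Finset.Ico (r K) (r (K+1)), fδ n = ∑ n ∈ Finset.Ico 1 (r (K+1)), fδ n :=
            Finset.sum_Ico_consecutive fδ (hr1 K) (hrlt K).le
          have := hblock1 K
          push_cast
          linarith
      -- the s-series dominates the δ-series on n ≥ 1
      have hdom : ∀ n : ℕ, 1 ≤ n → fδ n ≤ f n := by
        intro n hn
        have han : 0 ≤ a n := ha n hn
        apply mul_le_mul_of_nonneg_left _ (by positivity)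
        apply Real.exp_le_exp.mpr
        have : (0:ℝ) ≤ (n:ℝ) := Nat.cast_nonneg n
        nlinarith
      obtain ⟨K, hKgt⟩ := exists_nat_gt (∑' n, f (n+1))
      have hle1 : ∑ n ∈ Finset.Ico 1 (r K), fδ n ≤ ∑ n ∈ Finset.Ico 1 (r K), f n := by
        apply Finset.sum_le_sum
        intro n hn
        rw [Finset.mem_Ico] at hn
        exact hdom n hn.1
      have hle2 : ∑ n ∈ Finset.Ico 1 (r K), f n ≤ ∑' n, f (n+1) := by
        have e1 : ∑ n ∈ Finset.Ico 1 (r K), f n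
            = ∑ n ∈ Finset.range (r K - 1), f (n+1) := by
          rw [Finset.sum_Ico_eq_sum_range]
          simp [add_comm]
        rw [e1]
        exact Summable.sum_le_tsum _ (fun n _ => hf1nn n) hf1
      have := hpartial K
      linarith
end
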